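/- Let c be a cost vector of nonnegative reals, let t ≥ 1 be an integer, and let G be a simple graph. Let V₀ and V₁ be sets of pairwise clones in G such that V₀ ∪ V₁ is an independent set of G and V₀, V₁ are disjoint. Then θ*_t(G, c) ≤ max{ θ*_t(G(V₀→V₁), c), θ*_t(G(V₁→V₀), c) }. -/

import Mathlib

open scoped Classical
open Finset

/-- `K` is a clique of `G`: a nonempty set of pairwise adjacent vertices. -/
def IsCliqueOf {V : Type} [Fintype V] [DecidableEq V] (G : SimpleGraph V) (K : Finset V) : Prop :=
  K.Nonempty ∧ G.IsClique (K : Set V)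

/-- Total `c`-cost of a weighting `f` of the finsets of vertices. -/
noncomputable def cliqueCost {V : Type} [Fintype V] [DecidableEq V]
    (c : ℕ → ℝ) (f : Finset V → ℝ) : ℝ :=
  ∑ K : Finset V, c K.card * f K

/-- `f` is a fractional `t`-clique cover of `G`. -/
def IsFracCover {V : Type} [Fintype V] [DecidableEq V]
    (t : ℕ) (G : SimpleGraph V) (f : Finset V → ℝ) : Prop :=
  (∀ K, 0 ≤ f K) ∧ (∀ K, ¬ IsCliqueOf G K → f K = 0) ∧
  ∀ T : Finset V, T.card = t → G.IsClique (T : Set V) →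
    1 ≤ ∑ K ∈ Finset.univ.filter (fun K => T ⊆ K), f K

/-- `f` is a fractional `t`-clique decomposition of `G`. -/
def IsFracDecomp {V : Type} [Fintype V] [DecidableEq V]
    (t : ℕ) (G : SimpleGraph V) (f : Finset V → ℝ) : Prop :=
  (∀ K, 0 ≤ f K) ∧ (∀ K, ¬ IsCliqueOf G K → f K = 0) ∧
  ∀ T : Finset V, T.card = t → G.IsClique (T : Set V) →
    ∑ K ∈ Finset.univ.filter (fun K => T ⊆ K), f K = 1

/-- `f` is an integer (`{0,1}`-valued) `t`-clique cover of `G`. -/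
def IsIntCover {V : Type} [Fintype V] [DecidableEq V]
    (t : ℕ) (G : SimpleGraph V) (f : Finset V → ℝ) : Prop :=
  IsFracCover t G f ∧ ∀ K, f K = 0 ∨ f K = 1

/-- `f` is an integer (`{0,1}`-valued) `t`-clique decomposition of `G`. -/
def IsIntDecomp {V : Type} [Fintype V] [DecidableEq V]
    (t : ℕ) (G : SimpleGraph V) (f : Finset V → ℝ) : Prop :=
  IsFracDecomp t G f ∧ ∀ K, f K = 0 ∨ f K = 1

/-- θ*_t(G,c): minimum total c-cost of a fractional t-clique cover. -/
noncomputable def thetaFrac {V : Type} [Fintype V] [DecidableEq V]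
    (t : ℕ) (G : SimpleGraph V) (c : ℕ → ℝ) : ℝ :=
  sInf { x | ∃ f, IsFracCover t G f ∧ x = cliqueCost c f }

/-- θ_t(G,c): minimum total c-cost of an integer t-clique cover. -/
noncomputable def thetaInt {V : Type} [Fintype V] [DecidableEq V]
    (t : ℕ) (G : SimpleGraph V) (c : ℕ → ℝ) : ℝ :=
  sInf { x | ∃ f, IsIntCover t G f ∧ x = cliqueCost c f }

/-- π*_t(G,c): minimum total c-cost of a fractional t-clique decomposition. -/
noncomputable def piFrac {V : Type} [Fintype V] [DecidableEq V]
    (t : ℕ) (G : SimpleGraph V) (c : ℕ → ℝ) : ℝ :=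
  sInf { x | ∃ f, IsFracDecomp t G f ∧ x = cliqueCost c f }

/-- π_t(G,c): minimum total c-cost of an integer t-clique decomposition. -/
noncomputable def piInt {V : Type} [Fintype V] [DecidableEq V]
    (t : ℕ) (G : SimpleGraph V) (c : ℕ → ℝ) : ℝ :=
  sInf { x | ∃ f, IsIntDecomp t G f ∧ x = cliqueCost c f }

/-- `G` is complete multipartite: vertices can be assigned to parts so that
adjacency holds exactly between distinct parts. -/
def IsCompleteMultipartite {V : Type} [Fintype V] [DecidableEq V]
    (G : SimpleGraph V) : Prop :=
  ∃ p : V → ℕ, ∀ u v, G.Adj u v ↔ p u ≠ p v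

/-- `U` is a (nonempty) set of pairwise clones: all vertices of `U` have the
same neighborhood in `G`. -/
def IsCloneSet {V : Type} [Fintype V] [DecidableEq V] (G : SimpleGraph V) (U : Set V) : Prop :=
  U.Nonempty ∧ ∀ u ∈ U, ∀ v ∈ U, G.neighborSet u = G.neighborSet v

/-- `G(V₀ → V₁)`: symmetrize `V₀` to `V₁`.  Edges inside the complement of
`V₀ ∪ V₁` are kept, and every vertex of `V₀ ∪ V₁` is joined exactly to the
common neighborhood of the vertices of `V₁`. -/
def symmetrize {V : Type} [Fintype V] [DecidableEq V]
    (G : SimpleGraph V) (V₀ V₁ : Set V) : SimpleGraph V where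
  Adj x y :=
    (x ∉ V₀ ∪ V₁ ∧ y ∉ V₀ ∪ V₁ ∧ G.Adj x y) ∨
    (x ∈ V₀ ∪ V₁ ∧ y ∉ V₀ ∪ V₁ ∧ ∃ z ∈ V₁, G.Adj z y) ∨
    (y ∈ V₀ ∪ V₁ ∧ x ∉ V₀ ∪ V₁ ∧ ∃ z ∈ V₁, G.Adj z x)
  symm := by
    constructor
    rintro x y (⟨hx, hy, h⟩ | ⟨hx, hy, h⟩ | ⟨hy, hx, h⟩)
    · exact Or.inl ⟨hy, hx, h.symm⟩
    · exact Or.inr (Or.inr ⟨hx, hy, h⟩)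
    · exact Or.inr (Or.inl ⟨hy, hx, h⟩)
  loopless := by
    constructor
    rintro x (⟨hx, hy, h⟩ | ⟨hx, hy, h⟩ | ⟨hy, hx, h⟩)
    · exact G.irrefl h
    · exact hy hx
    · exact hx hy


/-!
Write `U = V₀ ∪ V₁`. A fractional cover `f₀` of `G(V₀ → V₁)` lives on cliques meeting `U` in at
most one vertex, and in `G(V₀ → V₁)` all vertices of `U` are clones with the neighbourhood of `V₁`.
So for each `w ∈ V₁`, moving the `U`-vertex of every clique onto `w` sends `f₀` to a weighting of
cliques of `G` of the same cost. In this image a `t`-clique of `G` avoiding `U` keeps weight at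
least `1`, and a `t`-clique `T` of `G` through `w` gets weight at least `|U|`: one unit for each
`t`-clique of `G(V₀ → V₁)` obtained from `T` by replacing `w` with some `u ∈ U`. Summing these
images over `w ∈ V₁`, together with the analogous images of a cover `f₁` of `G(V₁ → V₀)` over
`w ∈ V₀`, and dividing by `|U|` gives a fractional cover of `G` of cost
`(|V₁| ‖f₀‖ + |V₀| ‖f₁‖) / |U| ≤ max ‖f₀‖ ‖f₁‖`.
-/

section Pushforward

variable {V : Type} [Fintype V] [DecidableEq V]

noncomputable def pushforward (r : Finset V → Finset V) (f : Finset V → ℝ) (K : Finset V) : ℝ :=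
  ∑ K' ∈ univ.filter (fun K' => r K' = K), f K'

lemma sum_mul_pushforward (r : Finset V → Finset V) (f g : Finset V → ℝ) :
    ∑ K, g K * pushforward r f K = ∑ K, g (r K) * f K := by
  rw [← sum_fiberwise univ r fun K => g (r K) * f K]
  refine sum_congr rfl fun K _ => ?_
  rw [pushforward, mul_sum]
  exact sum_congr rfl fun K' hK' => by rw [(mem_filter.1 hK').2]

lemma cliqueCost_pushforward (c : ℕ → ℝ) (r : Finset V → Finset V) (f : Finset V → ℝ) :
    cliqueCost c (pushforward r f) = ∑ K, c #(r K) * f K :=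
  sum_mul_pushforward r f _

lemma sum_filter_subset_pushforward (r : Finset V → Finset V) (f : Finset V → ℝ)
    (T : Finset V) :
    ∑ K ∈ univ.filter (fun K => T ⊆ K), pushforward r f K
      = ∑ K ∈ univ.filter (fun K => T ⊆ r K), f K := by
  simpa only [sum_filter, ite_mul, one_mul, zero_mul] using
    sum_mul_pushforward r f fun K => if T ⊆ K then 1 else 0

end Pushforward

section Retract

variable {V : Type} [DecidableEq V] {U K S : Finset V} {u w : V}

def retract (U : Finset V) (w : V) (K : Finset V) : Finset V :=
  if Disjoint K U then K else insert w (K \ U)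

lemma card_retract (hw : w ∈ U) (hK : #(K ∩ U) ≤ 1) : #(retract U w K) = #K := by
  unfold retract
  split_ifs with hdisj
  · rfl
  have hone : #(K ∩ U) = 1 :=
    le_antisymm hK (card_pos.2 (not_disjoint_iff_nonempty_inter.1 hdisj))
  have hw' : w ∉ K \ U := fun h => (mem_sdiff.1 h).2 hw
  have := card_sdiff_add_card_inter K U
  rw [card_insert_of_notMem hw']
  omega

lemma subset_retract_iff_of_disjoint (hw : w ∈ U) (hS : Disjoint S U) :
    S ⊆ retract U w K ↔ S ⊆ K := by
  unfold retract
  split_ifs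
  · rfl
  rw [subset_insert_iff_of_notMem (disjoint_right.1 hS hw), subset_sdiff, and_iff_left hS]

lemma insert_subset_retract (hS : Disjoint S U) (hu : u ∈ U) (h : insert u S ⊆ K) :
    insert w S ⊆ retract U w K := by
  have hK : ¬Disjoint K U := fun hK => disjoint_left.1 hK (h (mem_insert_self u S)) hu
  rw [retract, if_neg hK]
  exact insert_subset_insert w (subset_sdiff.2 ⟨(insert_subset_iff.1 h).2, hS⟩)

lemma card_filter_insert_subset_le (hS : Disjoint S U) (hK : #(K ∩ U) ≤ 1) :
    (#{u ∈ U | insert u S ⊆ K} : ℝ) ≤ if insert w S ⊆ retract U w K then 1 else 0 := by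
  split_ifs with h
  · have hsub : {u ∈ U | insert u S ⊆ K} ⊆ K ∩ U := fun u hu =>
      mem_inter.2 ⟨(mem_filter.1 hu).2 (mem_insert_self u S), (mem_filter.1 hu).1⟩
    exact_mod_cast (card_le_card hsub).trans hK
  · have hempty : {u ∈ U | insert u S ⊆ K} = ∅ :=
      filter_eq_empty_iff.2 fun u hu huK => h (insert_subset_retract hS hu huK)
    simp [hempty]

lemma disjoint_erase_of_card_inter_le_one {T : Finset V} (hT : #(T ∩ U) ≤ 1)
    (hw : w ∈ T ∩ U) : Disjoint (T.erase w) U :=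
  disjoint_left.2 fun x hx hxU => ne_of_mem_erase hx <|
    card_le_one.1 hT x (mem_inter.2 ⟨mem_of_mem_erase hx, hxU⟩) w hw

end Retract

section Symmetrize

variable {V : Type} [Fintype V] [DecidableEq V] {G : SimpleGraph V} {A B s : Set V} {u w x y : V}

lemma symmetrize_adj_of_notMem (hx : x ∉ A ∪ B) (hy : y ∉ A ∪ B) :
    (symmetrize G A B).Adj x y ↔ G.Adj x y := by
  simp only [symmetrize, hx, hy, not_false_eq_true, true_and, false_and, or_false]

lemma symmetrize_adj_of_mem_of_notMem (hx : x ∈ A ∪ B) (hy : y ∉ A ∪ B) :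
    (symmetrize G A B).Adj x y ↔ ∃ z ∈ B, G.Adj z y := by
  simp only [symmetrize, hx, hy, not_true_eq_false, not_false_eq_true, true_and, false_and,
    and_false, or_false, false_or]

lemma not_symmetrize_adj (hx : x ∈ A ∪ B) (hy : y ∈ A ∪ B) : ¬(symmetrize G A B).Adj x y := by
  simp only [symmetrize, hx, hy, not_true_eq_false, not_false_eq_true, false_and, and_false,
    or_false]

lemma IsCloneSet.exists_adj_iff (hB : IsCloneSet G B) (hw : w ∈ B) :
    (∃ z ∈ B, G.Adj z y) ↔ G.Adj w y :=
  ⟨fun ⟨z, hz, hzy⟩ => by rw [← SimpleGraph.mem_neighborSet, ← hB.2 z hz w hw]; exact hzy,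
    fun h => ⟨w, hw, h⟩⟩

lemma isClique_symmetrize_iff (hs : Disjoint s (A ∪ B)) :
    (symmetrize G A B).IsClique s ↔ G.IsClique s := by
  refine forall₂_congr fun x hx => forall₂_congr fun y hy => ?_
  rw [symmetrize_adj_of_notMem (Set.disjoint_left.1 hs hx) (Set.disjoint_left.1 hs hy)]

lemma isClique_symmetrize_insert_iff (hB : IsCloneSet G B) (hw : w ∈ B) (hu : u ∈ A ∪ B)
    (hs : Disjoint s (A ∪ B)) :
    (symmetrize G A B).IsClique (insert u s) ↔ G.IsClique (insert w s) := by
  rw [SimpleGraph.isClique_insert, SimpleGraph.isClique_insert, isClique_symmetrize_iff hs]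
  refine and_congr_right fun _ => forall₂_congr fun y hy => ?_
  have hy' := Set.disjoint_left.1 hs hy
  rw [symmetrize_adj_of_mem_of_notMem hu hy', hB.exists_adj_iff hw]
  exact ⟨fun h _ => h (ne_of_mem_of_not_mem hu hy'),
    fun h _ => h (ne_of_mem_of_not_mem (Or.inr hw) hy')⟩

end Symmetrize

lemma card_inter_le_one_of_isClique {V : Type} [DecidableEq V] {H : SimpleGraph V}
    {K U : Finset V} (hK : H.IsClique (K : Set V)) (hU : ∀ u ∈ U, ∀ v ∈ U, ¬H.Adj u v) :
    #(K ∩ U) ≤ 1 :=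
  card_le_one.2 fun a ha b hb => by_contra fun hab =>
    hU a (mem_inter.1 ha).2 b (mem_inter.1 hb).2 (hK (mem_inter.1 ha).1 (mem_inter.1 hb).1 hab)

section FinsetCoe

variable {V : Type} [DecidableEq V] {A B : Finset V}

lemma mem_coe_union {u : V} (hu : u ∈ A ∪ B) : u ∈ (A ∪ B : Set V) := by
  rwa [← coe_union, mem_coe]

lemma disjoint_coe_union {S : Finset V} (hS : Disjoint S (A ∪ B)) :
    Disjoint (S : Set V) (A ∪ B : Set V) := by
  rwa [← coe_union, disjoint_coe]

end FinsetCoe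

section Spread

variable {V : Type} [Fintype V] [DecidableEq V]

noncomputable def spread (U B : Finset V) (f : Finset V → ℝ) (K : Finset V) : ℝ :=
  ∑ w ∈ B, pushforward (retract U w) f K

lemma spread_nonneg {U B : Finset V} {f : Finset V → ℝ} (hf : ∀ K, 0 ≤ f K) (K : Finset V) :
    0 ≤ spread U B f K :=
  sum_nonneg fun _ _ => sum_nonneg fun K' _ => hf K'

lemma sum_filter_subset_spread (U B : Finset V) (f : Finset V → ℝ) (T : Finset V) :
    ∑ K ∈ univ.filter (fun K => T ⊆ K), spread U B f K
      = ∑ w ∈ B, ∑ K ∈ univ.filter (fun K => T ⊆ retract U w K), f K := by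
  rw [← sum_congr rfl fun w _ => sum_filter_subset_pushforward (retract U w) f T]
  exact sum_comm

lemma sum_filter_subset_spread_of_disjoint {U B T : Finset V} (f : Finset V → ℝ) (hB : B ⊆ U)
    (hT : Disjoint T U) :
    ∑ K ∈ univ.filter (fun K => T ⊆ K), spread U B f K
      = #B * ∑ K ∈ univ.filter (fun K => T ⊆ K), f K := by
  rw [sum_filter_subset_spread, ← nsmul_eq_mul, ← sum_const]
  refine sum_congr rfl fun w hw => ?_
  simp only [subset_retract_iff_of_disjoint (hB hw) hT]

lemma cliqueCost_spread (c : ℕ → ℝ) {U B : Finset V} {f : Finset V → ℝ} (hB : B ⊆ U)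
    (hf : ∀ K, f K ≠ 0 → #(K ∩ U) ≤ 1) :
    cliqueCost c (spread U B f) = #B * cliqueCost c f := by
  have hterm : ∀ w ∈ B, cliqueCost c (pushforward (retract U w) f) = cliqueCost c f := by
    intro w hw
    rw [cliqueCost_pushforward]
    refine sum_congr rfl fun K _ => ?_
    by_cases hK : f K = 0
    · simp [hK]
    · rw [card_retract (hB hw) (hf K hK)]
  calc cliqueCost c (spread U B f)
      = ∑ w ∈ B, cliqueCost c (pushforward (retract U w) f) := by
        simp only [cliqueCost, spread, mul_sum]
        exact sum_comm
    _ = #B * cliqueCost c f := by rw [sum_congr rfl hterm, sum_const, nsmul_eq_mul]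

variable {G : SimpleGraph V} {A B : Finset V} {t : ℕ} {f : Finset V → ℝ} {w : V}

lemma IsFracCover.card_inter_le_one (hf : IsFracCover t (symmetrize G A B) f) {K : Finset V}
    (hK : f K ≠ 0) : #(K ∩ (A ∪ B)) ≤ 1 :=
  card_inter_le_one_of_isClique (not_not.1 (mt (hf.2.1 K) hK)).2 fun _ hu _ hv =>
    not_symmetrize_adj (mem_coe_union hu) (mem_coe_union hv)

lemma isCliqueOf_retract (hB : IsCloneSet G B) (hw : w ∈ B) {K : Finset V}
    (hK : IsCliqueOf (symmetrize G A B) K) : IsCliqueOf G (retract (A ∪ B) w K) := by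
  unfold retract
  split_ifs with hdisj
  · exact ⟨hK.1, (isClique_symmetrize_iff (disjoint_coe_union hdisj)).1 hK.2⟩
  obtain ⟨u, hu⟩ := not_disjoint_iff_nonempty_inter.1 hdisj
  have hsub : insert u (K \ (A ∪ B)) ⊆ K := insert_subset (mem_inter.1 hu).1 sdiff_subset
  have hcl := hK.2.subset (coe_subset.2 hsub)
  rw [coe_insert] at hcl
  refine ⟨insert_nonempty _ _, ?_⟩
  rw [coe_insert]
  exact (isClique_symmetrize_insert_iff hB hw (mem_coe_union (mem_inter.1 hu).2)
    (disjoint_coe_union sdiff_disjoint)).1 hcl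

lemma spread_eq_zero_of_not_isCliqueOf (hB : IsCloneSet G B)
    (hf : IsFracCover t (symmetrize G A B) f) {K : Finset V} (hK : ¬IsCliqueOf G K) :
    spread (A ∪ B) B f K = 0 :=
  sum_eq_zero fun _ hw => sum_eq_zero fun K' hK' => hf.2.1 K' fun hcl =>
    hK ((mem_filter.1 hK').2 ▸ isCliqueOf_retract hB hw hcl)

lemma card_le_sum_filter_subset_spread (hB : IsCloneSet G B)
    (hf : IsFracCover t (symmetrize G A B) f) {S : Finset V} (hw : w ∈ B)
    (hS : Disjoint S (A ∪ B)) (hT : #(insert w S) = t)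
    (hTG : G.IsClique ((insert w S : Finset V) : Set V)) :
    (#(A ∪ B) : ℝ) ≤ ∑ K ∈ univ.filter (fun K => insert w S ⊆ K), spread (A ∪ B) B f K := by
  set U := A ∪ B
  have hcover : ∀ u ∈ U, 1 ≤ ∑ K ∈ univ.filter (fun K => insert u S ⊆ K), f K := by
    intro u hu
    refine hf.2.2 _ ?_ ?_
    · rw [card_insert_of_notMem (disjoint_right.1 hS hu), ← hT,
        card_insert_of_notMem (disjoint_right.1 hS (mem_union_right A hw))]
    · rw [coe_insert] at hTG ⊢
      exact (isClique_symmetrize_insert_iff hB hw (mem_coe_union hu)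
        (disjoint_coe_union hS)).2 hTG
  calc (#U : ℝ) = ∑ u ∈ U, 1 := by simp
    _ ≤ ∑ u ∈ U, ∑ K ∈ univ.filter (fun K => insert u S ⊆ K), f K := sum_le_sum hcover
    _ = ∑ K, (#{u ∈ U | insert u S ⊆ K} : ℝ) * f K := by
      simp only [sum_filter]
      rw [sum_comm]
      simp only [← sum_boole, sum_mul, ite_mul, one_mul, zero_mul]
    _ ≤ ∑ K, (if insert w S ⊆ retract U w K then 1 else 0) * f K := by
      -- a clique of `symmetrize G A B` contains at most one of the sets `insert u S`
      refine sum_le_sum fun K _ => ?_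
      by_cases hK : f K = 0
      · simp [hK]
      · exact mul_le_mul_of_nonneg_right
          (card_filter_insert_subset_le hS (hf.card_inter_le_one hK)) (hf.1 K)
    _ = ∑ v ∈ {w}, ∑ K ∈ univ.filter (fun K => insert w S ⊆ retract U v K), f K := by
      simp [sum_filter]
    _ ≤ ∑ K ∈ univ.filter (fun K => insert w S ⊆ K), spread U B f K := by
      rw [sum_filter_subset_spread]
      refine sum_le_sum_of_subset_of_nonneg (singleton_subset_iff.2 hw) fun _ _ _ => ?_
      exact sum_nonneg fun K _ => hf.1 K

end Spread

section Merge

variable {V : Type} [Fintype V] [DecidableEq V] {G : SimpleGraph V} {A B : Finset V} {t : ℕ}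
  {f₀ f₁ : Finset V → ℝ}

noncomputable def mergeCovers (A B : Finset V) (f₀ f₁ : Finset V → ℝ) (K : Finset V) : ℝ :=
  (#(A ∪ B) : ℝ)⁻¹ * (spread (A ∪ B) B f₀ K + spread (B ∪ A) A f₁ K)

lemma card_le_sum_filter_subset_spread_add (hA : IsCloneSet G A) (hB : IsCloneSet G B)
    (hAB : Disjoint A B) (hind : ∀ u ∈ A ∪ B, ∀ v ∈ A ∪ B, ¬G.Adj u v)
    (hf₀ : IsFracCover t (symmetrize G A B) f₀) (hf₁ : IsFracCover t (symmetrize G B A) f₁)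
    {T : Finset V} (hT : #T = t) (hTG : G.IsClique (T : Set V)) :
    (#(A ∪ B) : ℝ) ≤ ∑ K ∈ univ.filter (fun K => T ⊆ K), spread (A ∪ B) B f₀ K
      + ∑ K ∈ univ.filter (fun K => T ⊆ K), spread (B ∪ A) A f₁ K := by
  have hX := sum_nonneg fun K (_ : K ∈ univ.filter (fun K => T ⊆ K)) =>
    spread_nonneg (U := A ∪ B) (B := B) hf₀.1 K
  have hY := sum_nonneg fun K (_ : K ∈ univ.filter (fun K => T ⊆ K)) =>
    spread_nonneg (U := B ∪ A) (B := A) hf₁.1 K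
  by_cases hTU : Disjoint T (A ∪ B)
  · have hTU' : Disjoint T (B ∪ A) := by rwa [union_comm]
    have h₀ := hf₀.2.2 T hT ((isClique_symmetrize_iff (disjoint_coe_union hTU)).2 hTG)
    have h₁ := hf₁.2.2 T hT ((isClique_symmetrize_iff (disjoint_coe_union hTU')).2 hTG)
    rw [card_union_of_disjoint hAB, Nat.cast_add,
      sum_filter_subset_spread_of_disjoint f₀ subset_union_right hTU,
      sum_filter_subset_spread_of_disjoint f₁ subset_union_right hTU']
    calc (#A : ℝ) + #B = #B * 1 + #A * 1 := by ring
      _ ≤ _ := by gcongr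
  obtain ⟨w, hw⟩ := not_disjoint_iff_nonempty_inter.1 hTU
  have hS := disjoint_erase_of_card_inter_le_one (card_inter_le_one_of_isClique hTG hind) hw
  have hTw : insert w (T.erase w) = T := insert_erase (mem_inter.1 hw).1
  rcases mem_union.1 (mem_inter.1 hw).2 with hwA | hwB
  · have := card_le_sum_filter_subset_spread hA hf₁ hwA (by rwa [union_comm])
      (by rwa [hTw]) (by rwa [hTw])
    rw [hTw, congrArg card (union_comm B A)] at this
    linarith
  · have := card_le_sum_filter_subset_spread hB hf₀ hwB hS (by rwa [hTw]) (by rwa [hTw])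
    rw [hTw] at this
    linarith

lemma isFracCover_mergeCovers (hA : IsCloneSet G A) (hB : IsCloneSet G B) (hAB : Disjoint A B)
    (hind : ∀ u ∈ A ∪ B, ∀ v ∈ A ∪ B, ¬G.Adj u v)
    (hf₀ : IsFracCover t (symmetrize G A B) f₀) (hf₁ : IsFracCover t (symmetrize G B A) f₁) :
    IsFracCover t G (mergeCovers A B f₀ f₁) := by
  have hNpos : (0 : ℝ) < #(A ∪ B) := by
    exact_mod_cast card_pos.2 ((coe_nonempty.1 hA.1).mono subset_union_left)
  refine ⟨fun K => ?_, fun K hK => ?_, fun T hT hTG => ?_⟩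
  · exact mul_nonneg (by positivity) (add_nonneg (spread_nonneg hf₀.1 K) (spread_nonneg hf₁.1 K))
  · rw [mergeCovers, spread_eq_zero_of_not_isCliqueOf hB hf₀ hK,
      spread_eq_zero_of_not_isCliqueOf hA hf₁ hK, add_zero, mul_zero]
  simp only [mergeCovers, ← mul_sum, sum_add_distrib]
  rw [← inv_mul_cancel₀ hNpos.ne']
  exact mul_le_mul_of_nonneg_left
    (card_le_sum_filter_subset_spread_add hA hB hAB hind hf₀ hf₁ hT hTG) (inv_nonneg.2 hNpos.le)

lemma cliqueCost_mergeCovers_le_max (c : ℕ → ℝ) (hA : IsCloneSet G A) (hAB : Disjoint A B)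
    (hf₀ : IsFracCover t (symmetrize G A B) f₀) (hf₁ : IsFracCover t (symmetrize G B A) f₁) :
    cliqueCost c (mergeCovers A B f₀ f₁) ≤ max (cliqueCost c f₀) (cliqueCost c f₁) := by
  have hN : (#(A ∪ B) : ℝ) = #B + #A := by
    rw [card_union_of_disjoint hAB, Nat.cast_add, add_comm]
  have hNpos : (0 : ℝ) < #(A ∪ B) := by
    exact_mod_cast card_pos.2 ((coe_nonempty.1 hA.1).mono subset_union_left)
  have hcost : cliqueCost c (mergeCovers A B f₀ f₁)
      = (#(A ∪ B) : ℝ)⁻¹ * (#B * cliqueCost c f₀ + #A * cliqueCost c f₁) := by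
    rw [← cliqueCost_spread c subset_union_right fun K hK => hf₀.card_inter_le_one hK,
      ← cliqueCost_spread c subset_union_right fun K hK => hf₁.card_inter_le_one hK]
    simp only [cliqueCost, mergeCovers, mul_sum, ← sum_add_distrib]
    exact sum_congr rfl fun K _ => by ring
  set M := max (cliqueCost c f₀) (cliqueCost c f₁)
  calc cliqueCost c (mergeCovers A B f₀ f₁)
      ≤ (#(A ∪ B) : ℝ)⁻¹ * (#B * M + #A * M) := by
        rw [hcost]
        gcongr
        exacts [le_max_left _ _, le_max_right _ _]
    _ = M := by rw [← add_mul, ← hN, inv_mul_cancel_left₀ hNpos.ne']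

end Merge

section Theta

variable {V : Type} [Fintype V] [DecidableEq V] {t : ℕ} {c : ℕ → ℝ}

lemma exists_isFracCover [Nonempty V] (t : ℕ) (G : SimpleGraph V) : ∃ f, IsFracCover t G f := by
  refine ⟨fun K => if IsCliqueOf G K then 1 else 0, fun K => ?_, fun K hK => if_neg hK,
    fun T _ hT => ?_⟩
  · dsimp only
    split_ifs <;> norm_num
  obtain ⟨K, hTK, hK⟩ : ∃ K, T ⊆ K ∧ IsCliqueOf G K := by
    rcases T.eq_empty_or_nonempty with rfl | hne
    · obtain ⟨v⟩ := ‹Nonempty V›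
      exact ⟨{v}, empty_subset _, singleton_nonempty v, by simp⟩
    · exact ⟨T, subset_rfl, hne, hT⟩
  calc (1 : ℝ) = if IsCliqueOf G K then 1 else 0 := (if_pos hK).symm
    _ ≤ _ := single_le_sum (f := fun K => if IsCliqueOf G K then (1 : ℝ) else 0)
      (fun K _ => by split_ifs <;> norm_num) (mem_filter.2 ⟨mem_univ K, hTK⟩)

lemma cliqueCost_nonneg (hc : ∀ i, 1 ≤ i → 0 ≤ c i) {G : SimpleGraph V} {f : Finset V → ℝ}
    (hf : IsFracCover t G f) : 0 ≤ cliqueCost c f := by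
  refine sum_nonneg fun K _ => ?_
  by_cases hK : IsCliqueOf G K
  · exact mul_nonneg (hc _ (card_pos.2 hK.1)) (hf.1 K)
  · rw [hf.2.1 K hK, mul_zero]

lemma thetaFrac_le_max_of_forall_exists [Nonempty V] (hc : ∀ i, 1 ≤ i → 0 ≤ c i)
    {G G₀ G₁ : SimpleGraph V}
    (h : ∀ f₀ f₁, IsFracCover t G₀ f₀ → IsFracCover t G₁ f₁ →
      ∃ f, IsFracCover t G f ∧ cliqueCost c f ≤ max (cliqueCost c f₀) (cliqueCost c f₁)) :
    thetaFrac t G c ≤ max (thetaFrac t G₀ c) (thetaFrac t G₁ c) := by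
  have hne (H : SimpleGraph V) : {x | ∃ f, IsFracCover t H f ∧ x = cliqueCost c f}.Nonempty :=
    let ⟨f, hf⟩ := exists_isFracCover t H
    ⟨_, f, hf, rfl⟩
  have hbdd : BddBelow {x | ∃ f, IsFracCover t G f ∧ x = cliqueCost c f} :=
    ⟨0, by rintro _ ⟨f, hf, rfl⟩; exact cliqueCost_nonneg hc hf⟩
  refine le_of_forall_pos_le_add fun ε hε => ?_
  obtain ⟨_, ⟨f₀, hf₀, rfl⟩, h₀⟩ := Real.lt_sInf_add_pos (hne G₀) hε
  obtain ⟨_, ⟨f₁, hf₁, rfl⟩, h₁⟩ := Real.lt_sInf_add_pos (hne G₁) hε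
  obtain ⟨f, hf, hcost⟩ := h f₀ f₁ hf₀ hf₁
  calc thetaFrac t G c ≤ cliqueCost c f := csInf_le hbdd ⟨f, hf, rfl⟩
    _ ≤ max (cliqueCost c f₀) (cliqueCost c f₁) := hcost
    _ ≤ max (thetaFrac t G₀ c + ε) (thetaFrac t G₁ c + ε) := max_le_max h₀.le h₁.le
    _ = max (thetaFrac t G₀ c) (thetaFrac t G₁ c) + ε := max_add_add_right _ _ _

end Theta

theorem stmt8_general (t : ℕ) (c : ℕ → ℝ) (hc : ∀ i, 1 ≤ i → 0 ≤ c i)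
    (n : ℕ) (G : SimpleGraph (Fin n)) (V₀ V₁ : Set (Fin n))
    (h₀ : IsCloneSet G V₀) (h₁ : IsCloneSet G V₁) (hdisj : Disjoint V₀ V₁)
    (hind : ∀ u ∈ V₀ ∪ V₁, ∀ v ∈ V₀ ∪ V₁, ¬ G.Adj u v) :
    thetaFrac t G c ≤
      max (thetaFrac t (symmetrize G V₀ V₁) c) (thetaFrac t (symmetrize G V₁ V₀) c) := by
  obtain ⟨A, rfl⟩ := V₀.toFinite.exists_finset_coe
  obtain ⟨B, rfl⟩ := V₁.toFinite.exists_finset_coe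
  obtain ⟨v, -⟩ := h₀.1
  have : Nonempty (Fin n) := ⟨v⟩
  have hAB := disjoint_coe.1 hdisj
  refine thetaFrac_le_max_of_forall_exists hc fun f₀ f₁ hf₀ hf₁ => ⟨mergeCovers A B f₀ f₁, ?_,
    cliqueCost_mergeCovers_le_max c h₀ hAB hf₀ hf₁⟩
  exact isFracCover_mergeCovers h₀ h₁ hAB
    (fun u hu v hv => hind u (mem_coe_union hu) v (mem_coe_union hv)) hf₀ hf₁

/-- Lemma 2.1 (cover part): symmetrizing one clone class onto the other does
not decrease the fractional `t`-clique cover number, for at least one of the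
two directions. -/
theorem stmt8 (t : ℕ) (ht : 1 ≤ t) (c : ℕ → ℝ) (hc : ∀ i, 1 ≤ i → 0 ≤ c i)
    (n : ℕ) (G : SimpleGraph (Fin n)) (V₀ V₁ : Set (Fin n))
    (h₀ : IsCloneSet G V₀) (h₁ : IsCloneSet G V₁) (hdisj : Disjoint V₀ V₁)
    (hind : ∀ u ∈ V₀ ∪ V₁, ∀ v ∈ V₀ ∪ V₁, ¬ G.Adj u v) :
    thetaFrac t G c ≤
      max (thetaFrac t (symmetrize G V₀ V₁) c) (thetaFrac t (symmetrize G V₁ V₀) c) :=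
  stmt8_general t c hc n G V₀ V₁ h₀ h₁ hdisj hind
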